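/- For every real α and all strict partitions μ and λ with |μ| = k and |λ| = n ≥ k, the following combinatorial identity for the path-counting function h(·,·) of the Schur graph holds: Σ_{x∈X(λ)} (x(x+1)+α) · h(μ, λ+□(x)) = 2(n+k+α/2)(n−k+1) · h(μ, λ) + Σ_{y∈Y(μ)} (y(y+1)+α) · h(μ−□(y), λ). -/

import Mathlib

open Finset

/-- A strict partition is encoded as the finite set of its (distinct, positive) parts:
`S` is a strict partition iff `0 ∉ S`. -/
def IsStrictPartition (S : Finset ℕ) : Prop := 0 ∉ S

/-- The weight `|λ|` of a strict partition: the sum of its parts. -/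
def wt (S : Finset ℕ) : ℕ := ∑ a ∈ S, a

/-- The length `ℓ(λ)` of a strict partition: its number of parts. -/
def len (S : Finset ℕ) : ℕ := S.card

/-- The set `X(λ)` of addable contents of the strict partition `λ`:
the contents `x` of boxes that can be added to the shifted Young diagram.
A part `a ∈ S` gives the addable content `a` iff `a + 1` is not a part, and `0` is an
addable content iff `1` is not a part (i.e. `λ` is empty or its smallest part is `≥ 2`). -/
def Xset (S : Finset ℕ) : Finset ℕ :=
  (S.filter (fun x => x + 1 ∉ S)) ∪ (if 1 ∉ S then {0} else ∅)

/-- The set `Y(λ)` of removable contents of the strict partition `λ`: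
`y ∈ Y(λ)` iff `y + 1` is a part and `y` is not a part. -/
def Yset (S : Finset ℕ) : Finset ℕ :=
  (S.filter (fun p => p - 1 ∉ S)).image (fun p => p - 1)

/-- `λ + □(x)`: add to `λ` the box of content `x ∈ X(λ)`. -/
def addBox (S : Finset ℕ) (x : ℕ) : Finset ℕ :=
  if x = 0 then insert 1 S else insert (x + 1) (S.erase x)

/-- `λ − □(y)`: remove from `λ` the box of content `y ∈ Y(λ)`. -/
def removeBox (S : Finset ℕ) (y : ℕ) : Finset ℕ :=
  if y = 0 then S.erase 1 else insert y (S.erase (y + 1))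

/-- `c(c+1)` as a real number. -/
def cc (t : ℕ) : ℝ := t * (t + 1)

/-- The number `h(λ)` of standard shifted tableaux (with the doubled-edge convention):
`h(λ) = 2^{|λ|−ℓ(λ)} |λ|!/(λ_1!⋯λ_ℓ!) ∏_{i<j} (λ_i−λ_j)/(λ_i+λ_j)`. -/
noncomputable def hfun (S : Finset ℕ) : ℝ :=
  2 ^ (wt S - len S) * (Nat.factorial (wt S) : ℝ) / (∏ a ∈ S, (Nat.factorial a : ℝ)) *
    ∏ p ∈ S.offDiag.filter (fun p => p.2 < p.1), (((p.1 : ℝ) - p.2) / ((p.1 : ℝ) + p.2))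

/-- The partial fraction coefficients `θ↑_x(λ)`, `x ∈ X(λ)`. -/
noncomputable def thetaUp (S : Finset ℕ) (xh : ℕ) : ℝ :=
  if xh = 0 then (∏ y ∈ Yset S, cc y) / (∏ x ∈ (Xset S).erase 0, cc x)
  else (∏ y ∈ Yset S, (cc xh - cc y)) /
    (cc xh * ∏ x ∈ ((Xset S).erase 0).erase xh, (cc xh - cc x))

/-- The partial fraction coefficients `θ↓_y(λ)`, `y ∈ Y(λ)`. -/
noncomputable def thetaDown (S : Finset ℕ) (yh : ℕ) : ℝ :=
  (∏ x ∈ (Xset S).erase 0, (cc yh - cc x)) / (∏ y ∈ (Yset S).erase yh, (cc yh - cc y))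

/-- `Z_α(n) = α(α+2)⋯(α+2n−2)`. -/
noncomputable def Zfun (α : ℝ) (n : ℕ) : ℝ := ∏ k ∈ Finset.range n, (α + 2 * k)

/-- The multiplicative measure weight
`M_n^α(λ) = (h(λ)² 2^{ℓ−n}/n!) ⬝ ∏_{□∈λ}(c(□)(c(□)+1)+α) / Z_α(n)`. -/
noncomputable def Mw (α : ℝ) (n : ℕ) (S : Finset ℕ) : ℝ :=
  hfun S ^ 2 * 2 ^ len S / 2 ^ n / (Nat.factorial n : ℝ) *
    (∏ p ∈ S, ∏ c ∈ Finset.range p, (cc c + α)) / Zfun α n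

/-!
Let `D f(λ) = ∑_{y ∈ Y(λ)} κ_y f(λ − □(y))` be the down operator of the Schur graph, so that
`h(μ, ·) = D h(μ, ·)` above level `|μ|`, and `U f(λ) = ∑_{x ∈ X(λ)} (x(x+1) + α) f(λ + □(x))`.
Adding and removing two different boxes commute, and telescoping along the rows gives
`∑_{x ∈ X(λ)} κ_x (x(x+1) + α) − ∑_{y ∈ Y(λ)} κ_y (y(y+1) + α) = 4|λ| + α`; together these give
`U f = (4|λ| + α) f + D U f` whenever `f = D f` one level above `λ`. Induction on `|λ|` then
proves the identity, starting at `|λ| = |μ| − 1`, where both sides count the boxes of `μ` whose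
removal gives `λ`, and using that the constant `C(n) = 2(n + k + α/2)(n − k + 1)` satisfies
`C(n) = C(n − 1) + 4n + α`.
-/

section Boxes

variable {S : Finset ℕ} {x y z a : ℕ}

lemma mem_Xset : x ∈ Xset S ↔ (x ∈ S ∧ x + 1 ∉ S) ∨ (x = 0 ∧ 1 ∉ S) := by
  unfold Xset
  split_ifs <;> simp_all [or_comm]

lemma mem_Yset : y ∈ Yset S ↔ y + 1 ∈ S ∧ y ∉ S := by
  simp only [Yset, mem_image, mem_filter]
  constructor
  · rintro ⟨_ | p, ⟨hp, hp'⟩, rfl⟩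
    · exact absurd hp hp'
    · exact ⟨hp, hp'⟩
  · rintro ⟨h1, h2⟩
    exact ⟨y + 1, ⟨h1, h2⟩, rfl⟩

lemma mem_addBox (h0 : 0 ∉ S) : a ∈ addBox S x ↔ a = x + 1 ∨ (a ≠ x ∧ a ∈ S) := by
  unfold addBox
  split_ifs with hx
  · subst hx; simp only [mem_insert]; grind
  · simp

lemma mem_removeBox : a ∈ removeBox S y ↔ (a = y ∧ y ≠ 0) ∨ (a ≠ y + 1 ∧ a ∈ S) := by
  unfold removeBox
  split_ifs with hy <;> simp [hy]

lemma zero_notMem_addBox (h0 : 0 ∉ S) : 0 ∉ addBox S x := by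
  simp [mem_addBox h0, h0]

lemma zero_notMem_removeBox (h0 : 0 ∉ S) : 0 ∉ removeBox S y := by
  simp only [mem_removeBox]
  grind

lemma mem_Yset_addBox (h0 : 0 ∉ S) : x ∈ Yset (addBox S x) := by
  simp [mem_Yset, mem_addBox h0]

lemma mem_Xset_removeBox (hy : y ∈ Yset S) : y ∈ Xset (removeBox S y) := by
  simp only [mem_Yset] at hy
  simp only [mem_Xset, mem_removeBox]
  grind

lemma removeBox_addBox (h0 : 0 ∉ S) (hx : x ∈ Xset S) : removeBox (addBox S x) x = S := by
  rw [mem_Xset] at hx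
  ext a
  simp only [mem_removeBox, mem_addBox h0]
  grind

lemma addBox_removeBox (h0 : 0 ∉ S) (hy : y ∈ Yset S) : addBox (removeBox S y) y = S := by
  rw [mem_Yset] at hy
  ext a
  simp only [mem_addBox (zero_notMem_removeBox h0), mem_removeBox]
  grind

lemma removeBox_addBox_comm (h0 : 0 ∉ S) (hx : x ∈ Xset S) (hz : z ∈ Yset (addBox S x))
    (hzx : z ≠ x) : removeBox (addBox S x) z = addBox (removeBox S z) x := by
  simp only [mem_Xset] at hx
  simp only [mem_Yset, mem_addBox h0] at hz
  ext a
  simp only [mem_removeBox, mem_addBox h0, mem_addBox (zero_notMem_removeBox h0)]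
  grind

lemma mem_Xset_and_mem_erase_Yset_addBox_iff (h0 : 0 ∉ S) :
    x ∈ Xset S ∧ z ∈ (Yset (addBox S x)).erase x ↔
      x ∈ (Xset (removeBox S z)).erase z ∧ z ∈ Yset S := by
  simp only [mem_erase, mem_Xset, mem_Yset, mem_addBox h0, mem_removeBox]
  grind

end Boxes

section Weight

variable {S : Finset ℕ} {x y : ℕ}

lemma wt_addBox (h0 : 0 ∉ S) (hx : x ∈ Xset S) : wt (addBox S x) = wt S + 1 := by
  rcases mem_Xset.1 hx with ⟨hxS, hx1⟩ | ⟨rfl, h1⟩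
  · have hx0 : x ≠ 0 := by rintro rfl; exact h0 hxS
    rw [wt, addBox, if_neg hx0, sum_insert (by simp [hx1]), wt, ← add_sum_erase S _ hxS]
    omega
  · rw [wt, addBox, if_pos rfl, sum_insert h1, wt, add_comm]

lemma wt_removeBox (hy : y ∈ Yset S) : wt (removeBox S y) + 1 = wt S := by
  obtain ⟨hy1, hyS⟩ := mem_Yset.1 hy
  rw [wt, wt, ← add_sum_erase S _ hy1, removeBox]
  split_ifs with hy0
  · subst hy0; rw [add_comm]
  · rw [sum_insert (by simp [hyS])]; omega

lemma len_removeBox_eq_iff (hy : y ∈ Yset S) : len (removeBox S y) = len S ↔ y ≠ 0 := by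
  obtain ⟨hy1, hyS⟩ := mem_Yset.1 hy
  have hpos := card_pos.2 ⟨_, hy1⟩
  rw [len, len, removeBox]
  split_ifs with hy0
  · subst hy0; rw [card_erase_of_mem hy1]; omega
  · rw [card_insert_of_notMem (by simp [hyS]), card_erase_of_mem hy1]; omega

end Weight

lemma sum_sub_pred_eq {M : Type*} [AddCommGroup M] {S : Finset ℕ} (h0 : 0 ∉ S) (f : ℕ → M) :
    ∑ a ∈ S, (f a - f (a - 1)) = ∑ a ∈ S with a + 1 ∉ S, f a - ∑ y ∈ Yset S, f y := by
  have himage : S.image (· - 1) = Yset S ∪ S.filter (· + 1 ∈ S) := by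
    ext y
    simp only [mem_image, mem_union, mem_filter, mem_Yset]
    constructor
    · rintro ⟨_ | a, ha, rfl⟩
      · exact absurd ha h0
      · by_cases a ∈ S <;> simp_all
    · rintro (⟨h, -⟩ | ⟨-, h⟩) <;> exact ⟨y + 1, h, rfl⟩
  have hinj : Set.InjOn (· - 1) (S : Set ℕ) := by
    intro a ha b hb hab
    have : a ≠ 0 := by rintro rfl; exact h0 ha
    have : b ≠ 0 := by rintro rfl; exact h0 hb
    simp only at hab
    omega
  have hdisj : Disjoint (Yset S) (S.filter (· + 1 ∈ S)) := by
    rw [disjoint_left]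
    intro y hy hy'
    exact (mem_Yset.1 hy).2 (mem_filter.1 hy').1
  rw [sum_sub_distrib, ← sum_image (f := f) hinj, himage, sum_union hdisj,
    ← sum_filter_not_add_sum_filter S (· + 1 ∈ S)]
  abel

-- the multiplicity `κ(λ − □(y), λ)` of an edge of the Schur graph depends only on the content `y`
noncomputable def edgeMult (y : ℕ) : ℝ := if y = 0 then 1 else 2

lemma cast_kappa_eq_edgeMult {S : Finset ℕ} {y : ℕ} (hy : y ∈ Yset S) :
    (((if len (removeBox S y) = len S then 2 else 1 : ℕ)) : ℝ) = edgeMult y := by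
  simp only [edgeMult, len_removeBox_eq_iff hy, ite_not]
  split_ifs <;> norm_num

lemma sum_Xset_eq_sum_Yset_add {S : Finset ℕ} (h0 : 0 ∉ S) (α : ℝ) :
    ∑ x ∈ Xset S, (cc x + α) * edgeMult x =
      ∑ y ∈ Yset S, (cc y + α) * edgeMult y + (4 * wt S + α) := by
  set F : ℕ → ℝ := fun t => 2 * (cc t + α)
  have hg : ∀ t, (cc t + α) * edgeMult t = F t - if t = 0 then α else 0 := by
    intro t; unfold edgeMult; split_ifs with ht <;> simp [F, ht, cc] <;> ring
  have hX : ∑ x ∈ Xset S, F x = ∑ a ∈ S with a + 1 ∉ S, F a + if 1 ∈ S then 0 else 2 * α := by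
    rw [Xset]
    split_ifs with h1
    · simp
    · rw [sum_union (by simp [h0]), sum_singleton]; simp [F, cc]
  have h0X : 0 ∈ Xset S ↔ 1 ∉ S := by simp [mem_Xset, h0]
  have h0Y : 0 ∈ Yset S ↔ 1 ∈ S := by simp [mem_Yset, h0]
  have htel : ∑ a ∈ S, (F a - F (a - 1)) = 4 * wt S := by
    rw [wt, Nat.cast_sum, mul_sum]
    refine sum_congr rfl fun a ha => ?_
    obtain _ | a := a
    · exact absurd ha h0
    · simp [F, cc]; ring
  simp only [hg, sum_sub_distrib, sum_ite_eq', hX, h0X, h0Y]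
  rw [sum_sub_pred_eq h0] at htel
  split_ifs <;> linarith

noncomputable def downSum (f : Finset ℕ → ℝ) (S : Finset ℕ) : ℝ :=
  ∑ y ∈ Yset S, edgeMult y * f (removeBox S y)

noncomputable def upSum (α : ℝ) (f : Finset ℕ → ℝ) (S : Finset ℕ) : ℝ :=
  ∑ x ∈ Xset S, (cc x + α) * f (addBox S x)

lemma sum_sum_removeBox_addBox_eq {M : Type*} [AddCommMonoid M] {S : Finset ℕ} (h0 : 0 ∉ S)
    (F : ℕ → ℕ → Finset ℕ → M) :
    ∑ x ∈ Xset S, ∑ z ∈ (Yset (addBox S x)).erase x, F x z (removeBox (addBox S x) z) =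
      ∑ z ∈ Yset S, ∑ x ∈ (Xset (removeBox S z)).erase z, F x z (addBox (removeBox S z) x) := by
  calc _ = ∑ x ∈ Xset S, ∑ z ∈ (Yset (addBox S x)).erase x, F x z (addBox (removeBox S z) x) :=
        sum_congr rfl fun x hx => sum_congr rfl fun z hz => by
          rw [removeBox_addBox_comm h0 hx (mem_of_mem_erase hz) (ne_of_mem_erase hz)]
    _ = _ := sum_comm' fun x z => mem_Xset_and_mem_erase_Yset_addBox_iff h0

lemma upSum_eq_add_downSum_upSum {S : Finset ℕ} (h0 : 0 ∉ S) (α : ℝ) (f : Finset ℕ → ℝ)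
    (hf : ∀ x ∈ Xset S, f (addBox S x) = downSum f (addBox S x)) :
    upSum α f S = (4 * wt S + α) * f S + downSum (upSum α f) S := by
  have hup : upSum α f S = (∑ x ∈ Xset S, (cc x + α) * edgeMult x) * f S +
      ∑ x ∈ Xset S, ∑ z ∈ (Yset (addBox S x)).erase x,
        (cc x + α) * edgeMult z * f (removeBox (addBox S x) z) := by
    rw [upSum, sum_mul, ← sum_add_distrib]
    refine sum_congr rfl fun x hx => ?_
    rw [hf x hx, downSum, ← add_sum_erase _ _ (mem_Yset_addBox h0), removeBox_addBox h0 hx,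
      mul_add, mul_sum]
    simp only [mul_assoc, mul_left_comm]
  have hdown : downSum (upSum α f) S = (∑ z ∈ Yset S, (cc z + α) * edgeMult z) * f S +
      ∑ z ∈ Yset S, ∑ x ∈ (Xset (removeBox S z)).erase z,
        (cc x + α) * edgeMult z * f (addBox (removeBox S z) x) := by
    rw [downSum, sum_mul, ← sum_add_distrib]
    refine sum_congr rfl fun z hz => ?_
    rw [upSum, ← add_sum_erase _ _ (mem_Xset_removeBox hz), addBox_removeBox h0 hz,
      mul_add, mul_sum]
    simp only [mul_assoc, mul_left_comm]
  rw [hup, hdown, sum_sum_removeBox_addBox_eq h0 fun x z T => (cc x + α) * edgeMult z * f T,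
    sum_Xset_eq_sum_Yset_add h0]
  ring

lemma filter_Xset_addBox_eq {S μ : Finset ℕ} (hS : 0 ∉ S) (hμ : 0 ∉ μ) :
    {x ∈ Xset S | addBox S x = μ} = {y ∈ Yset μ | removeBox μ y = S} := by
  ext x
  simp only [mem_filter]
  constructor
  · rintro ⟨hx, rfl⟩
    exact ⟨mem_Yset_addBox hS, removeBox_addBox hS hx⟩
  · rintro ⟨hy, rfl⟩
    exact ⟨mem_Xset_removeBox hy, addBox_removeBox hμ hy⟩

structure IsPathCount (H : Finset ℕ → Finset ℕ → ℝ) : Prop where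
  eq_ite : ∀ μ ν, 0 ∉ μ → 0 ∉ ν → wt ν ≤ wt μ → H μ ν = if ν = μ then 1 else 0
  eq_downSum : ∀ μ ν, 0 ∉ μ → 0 ∉ ν → wt μ < wt ν → H μ ν = downSum (H μ) ν

namespace IsPathCount

variable {α : ℝ} {H : Finset ℕ → Finset ℕ → ℝ} {μ : Finset ℕ}

lemma upSum_eq_of_wt_succ_eq (hH : IsPathCount H) (hμ : 0 ∉ μ) {S : Finset ℕ} (hS : 0 ∉ S)
    (hSμ : wt S + 1 = wt μ) :
    upSum α (H μ) S = ∑ y ∈ Yset μ, (cc y + α) * H (removeBox μ y) S := by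
  calc upSum α (H μ) S = ∑ x ∈ Xset S, (cc x + α) * (if addBox S x = μ then 1 else 0) :=
        sum_congr rfl fun x hx => by
          rw [hH.eq_ite μ _ hμ (zero_notMem_addBox hS) (by rw [wt_addBox hS hx, hSμ])]
    _ = ∑ y ∈ Yset μ, (cc y + α) * (if removeBox μ y = S then 1 else 0) := by
        simp only [mul_ite, mul_one, mul_zero, ← sum_filter, filter_Xset_addBox_eq hS hμ]
    _ = _ := sum_congr rfl fun y hy => by
          rw [hH.eq_ite _ S (zero_notMem_removeBox hμ) hS (by have := wt_removeBox hy; omega)]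
          simp only [@eq_comm _ S]

theorem upSum_eq (hH : IsPathCount H) (hμ : 0 ∉ μ) (S : Finset ℕ) (hS : 0 ∉ S)
    (hSμ : wt μ ≤ wt S + 1) :
    upSum α (H μ) S = 2 * ((wt S : ℝ) + wt μ + α / 2) * ((wt S : ℝ) - wt μ + 1) * H μ S +
      ∑ y ∈ Yset μ, (cc y + α) * H (removeBox μ y) S := by
  obtain hSμ | hSμ := hSμ.eq_or_lt
  · rw [hH.upSum_eq_of_wt_succ_eq hμ hS hSμ.symm, hSμ]
    push_cast
    ring
  have ih : ∀ z ∈ Yset S, upSum α (H μ) (removeBox S z) =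
      2 * ((wt S : ℝ) - 1 + wt μ + α / 2) * ((wt S : ℝ) - wt μ) * H μ (removeBox S z) +
        ∑ y ∈ Yset μ, (cc y + α) * H (removeBox μ y) (removeBox S z) := by
    intro z hz
    have hwt := wt_removeBox hz
    rw [hH.upSum_eq hμ _ (zero_notMem_removeBox hS) (by omega), ← hwt]
    push_cast
    ring_nf
  have hsum : downSum (upSum α (H μ)) S =
      2 * ((wt S : ℝ) - 1 + wt μ + α / 2) * ((wt S : ℝ) - wt μ) * downSum (H μ) S +
        ∑ y ∈ Yset μ, (cc y + α) * downSum (H (removeBox μ y)) S := by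
    rw [downSum, sum_congr rfl fun z hz => by rw [ih z hz]]
    simp only [downSum, mul_add, mul_sum, sum_add_distrib]
    congr 1
    · exact sum_congr rfl fun _ _ => by ring
    · rw [sum_comm]
      exact sum_congr rfl fun _ _ => sum_congr rfl fun _ _ => by ring
  -- at `wt S = wt μ` the recursion for `H μ S` fails, but there its coefficient vanishes
  have hμS : (wt S - wt μ : ℝ) * downSum (H μ) S = (wt S - wt μ) * H μ S := by
    obtain hlt | heq := (Nat.lt_succ_iff.1 hSμ).lt_or_eq
    · rw [hH.eq_downSum μ S hμ hS hlt]
    · rw [heq, sub_self, zero_mul, zero_mul]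
  have hrem : ∀ y ∈ Yset μ, downSum (H (removeBox μ y)) S = H (removeBox μ y) S := fun y hy =>
    (hH.eq_downSum _ S (zero_notMem_removeBox hμ) hS (by have := wt_removeBox hy; omega)).symm
  rw [upSum_eq_add_downSum_upSum hS α (H μ) fun x hx => hH.eq_downSum μ _ hμ
    (zero_notMem_addBox hS) (by rw [wt_addBox hS hx]; omega)]
  rw [hsum, sum_congr rfl fun y hy => by rw [hrem y hy], mul_assoc _ _ (downSum _ _), hμS]
  ring
termination_by wt S
decreasing_by have := wt_removeBox hz; omega

end IsPathCount

/-- **The combinatorial identity for the path-counting function `h(μ,λ)` of the Schur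
graph** (used in the proof of Lemma 2.10). Here `h` is the (unique) function satisfying
`h(μ,μ) = 1`, `h(μ,ν) = 0` when `|ν| ≤ |μ|` and `ν ≠ μ`, and the recursion
`h(μ,ν) = ∑_{ρ ∶ ν = ρ + box} h(μ,ρ) κ(ρ,ν)` when `|ν| > |μ|` (the partitions `ρ` from
which `ν` is obtained by adding one box are exactly the `ν − □(y)`, `y ∈ Y(ν)`, and
`κ(ρ,ν) = 2` if `ℓ(ν) = ℓ(ρ)`, `κ(ρ,ν) = 1` if `ℓ(ν) = ℓ(ρ)+1`).
For all real `α` and strict partitions `μ, λ` with `|μ| = k ≤ n = |λ|`: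
`∑_{x∈X(λ)} (x(x+1)+α) h(μ, λ+□(x))
  = 2(n+k+α/2)(n−k+1) h(μ,λ) + ∑_{y∈Y(μ)} (y(y+1)+α) h(μ−□(y), λ)`. -/
theorem pathcount_identity (α : ℝ) (h : Finset ℕ → Finset ℕ → ℕ)
    (h_refl : ∀ μ : Finset ℕ, IsStrictPartition μ → h μ μ = 1)
    (h_zero : ∀ μ ν : Finset ℕ, IsStrictPartition μ → IsStrictPartition ν →
      wt ν ≤ wt μ → ν ≠ μ → h μ ν = 0)
    (h_rec : ∀ μ ν : Finset ℕ, IsStrictPartition μ → IsStrictPartition ν →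
      wt μ < wt ν →
      h μ ν = ∑ y ∈ Yset ν,
        h μ (removeBox ν y) * (if len (removeBox ν y) = len ν then 2 else 1))
    (μ lam : Finset ℕ) (hμ : IsStrictPartition μ) (hlam : IsStrictPartition lam)
    (k n : ℕ) (hk : wt μ = k) (hn : wt lam = n) (hkn : k ≤ n) :
    ∑ x ∈ Xset lam, (cc x + α) * (h μ (addBox lam x) : ℝ) =
      2 * ((n : ℝ) + k + α / 2) * ((n : ℝ) - k + 1) * (h μ lam : ℝ) +
        ∑ y ∈ Yset μ, (cc y + α) * (h (removeBox μ y) lam : ℝ) := by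
  subst hk hn
  have hH : IsPathCount fun μ ν => (h μ ν : ℝ) := by
    refine ⟨fun μ ν hμ hν hwt => ?_, fun μ ν hμ hν hlt => ?_⟩
    · split_ifs with hνμ
      · subst hνμ
        simp [h_refl ν hν]
      · simp [h_zero μ ν hμ hν hwt hνμ]
    · rw [h_rec μ ν hμ hν hlt, downSum, Nat.cast_sum]
      refine sum_congr rfl fun y hy => ?_
      rw [Nat.cast_mul, cast_kappa_eq_edgeMult hy, mul_comm]
  exact hH.upSum_eq hμ lam hlam (by omega)
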